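/- arXiv:1102.3657 — 3 statements merged into one kernel-verified Lean document; each statement's English description precedes it below -/
import Mathlib

section
/- Let G be a topological group, Y a Hausdorff locally convex real topological vector space, and φ : G → Y a function of class LUC¹. If X, X₁, X₂ are one-parameter subgroups of G with X = X₁ + X₂ in the Trotter sense, then for every g ∈ G one has (D_X φ)(g) = (D_{X₁} φ)(g) + (D_{X₂} φ)(g). -/
/-!
Testing against continuous linear functionals reduces the claim to a normed target. There the
mean value theorem, applied along `s ↦ φ (g w Xᵢ(s))` and combined with the local left uniform
continuity of `D_{Xᵢ} φ`, gives `φ (g w Xᵢ(s)) - φ (g w) = s (D_{Xᵢ} φ)(g) + o(s)` uniformly for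
`w` near `1`. With `P = X₁(t/n) X₂(t/n)`, the difference `φ (g Pⁿ) - φ g` telescopes into `2n`
such increments; they are all based at points `g w` with `w` near `1`, because the Trotter
condition keeps the partial products `Pᵏ` close to `X(kt/n)`. Hence
`‖φ (g Pⁿ) - φ g - t ((D_{X₁} φ)(g) + (D_{X₂} φ)(g))‖ ≤ ε |t|` for small `t` and all large `n`,
and letting `n → ∞` replaces `Pⁿ` by `X(t)`.
-/

open Filter Topology Pointwise

/-- A one-parameter subgroup of a topological group `G`: a continuous homomorphism
from the additive group of reals into `G`. -/
structure OneParamSubgroup (G : Type*) [Group G] [TopologicalSpace G] where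
  toFun : ℝ → G
  continuous_toFun : Continuous toFun
  map_add : ∀ s t : ℝ, toFun (s + t) = toFun s * toFun t

/-- `X = X₁ + X₂` in the Trotter sense: `(X₁(t/n) X₂(t/n))^n → X(t)` uniformly on
compact subsets of `ℝ`. -/
def TrotterSum {G : Type*} [Group G] [TopologicalSpace G]
    (X X₁ X₂ : OneParamSubgroup G) : Prop :=
  ∀ K : Set ℝ, IsCompact K → ∀ W ∈ 𝓝 (1 : G), ∃ N : ℕ, ∀ n : ℕ, N ≤ n → ∀ t ∈ K,
    (X.toFun t)⁻¹ * (X₁.toFun (t / (n : ℝ)) * X₂.toFun (t / (n : ℝ))) ^ n ∈ W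

/-- `(D_X φ)(g)` exists and equals `z`. -/
def HasDirDerivAt {G Y : Type*} [Group G] [TopologicalSpace G]
    [AddCommGroup Y] [Module ℝ Y] [TopologicalSpace Y]
    (φ : G → Y) (X : OneParamSubgroup G) (g : G) (z : Y) : Prop :=
  Tendsto (fun t : ℝ => t⁻¹ • (φ (g * X.toFun t) - φ g)) (𝓝[≠] (0 : ℝ)) (𝓝 z)

/-- `φ : G → Y` is locally left uniformly continuous. -/
def LocallyLeftUC {G Y : Type*} [Group G] [TopologicalSpace G]
    [AddCommGroup Y] [TopologicalSpace Y] (φ : G → Y) : Prop :=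
  ∀ g₀ : G, ∃ V ∈ 𝓝 g₀, ∀ U ∈ 𝓝 (0 : Y), ∃ W ∈ 𝓝 (1 : G),
    ∀ x ∈ V, ∀ y ∈ V, x⁻¹ * y ∈ W → φ x - φ y ∈ U

/-- `φ` is of class LUC¹, with `D X g = (D_X φ)(g)`. -/
def IsLUC1 {G Y : Type*} [Group G] [TopologicalSpace G]
    [AddCommGroup Y] [Module ℝ Y] [TopologicalSpace Y]
    (φ : G → Y) (D : OneParamSubgroup G → G → Y) : Prop :=
  LocallyLeftUC φ ∧ (∀ X g, HasDirDerivAt φ X g (D X g)) ∧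
    ∀ X, LocallyLeftUC (D X)

theorem norm_sub_sub_nsmul_le {E : Type*} [SeminormedAddCommGroup E] {a : ℕ → E} {v : E}
    {η : ℝ} {n : ℕ} (h : ∀ k < n, ‖a (k + 1) - a k - v‖ ≤ η) : ‖a n - a 0 - n • v‖ ≤ n * η := by
  induction n with
  | zero => simp
  | succ n ih =>
    have hsplit : a (n + 1) - a 0 - (n + 1) • v = (a (n + 1) - a n - v) + (a n - a 0 - n • v) := by
      rw [succ_nsmul]; abel
    calc ‖a (n + 1) - a 0 - (n + 1) • v‖
        ≤ η + n * η := hsplit ▸ norm_add_le_of_le (h n n.lt_succ_self)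
          (ih fun k hk => h k (hk.trans n.lt_succ_self))
      _ = (n + 1 : ℕ) * η := by push_cast; ring

namespace OneParamSubgroup

variable {G : Type*} [Group G] [TopologicalSpace G]

theorem toFun_zero (X : OneParamSubgroup G) : X.toFun 0 = 1 := by
  have h := X.map_add 0 0
  rwa [add_zero, left_eq_mul] at h

theorem mul_toFun_sub (X : OneParamSubgroup G) (σ τ : ℝ) :
    X.toFun σ * X.toFun (τ - σ) = X.toFun τ := by
  rw [← X.map_add, add_sub_cancel]

end OneParamSubgroup

section TopologicalVectorSpace

variable {G Y Y' : Type*} [Group G] [TopologicalSpace G]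
  [AddCommGroup Y] [TopologicalSpace Y] [AddCommGroup Y'] [TopologicalSpace Y']

theorem LocallyLeftUC.continuous [IsTopologicalGroup G] [IsTopologicalAddGroup Y] {φ : G → Y}
    (h : LocallyLeftUC φ) : Continuous φ := by
  refine continuous_iff_continuousAt.2 fun g₀ => ?_
  obtain ⟨V, hV, hφV⟩ := h g₀
  rw [ContinuousAt, ← tendsto_sub_nhds_zero_iff]
  intro U hU
  obtain ⟨W, hW, hWU⟩ := hφV U hU
  rw [mem_map]
  have hW' : ∀ᶠ x in 𝓝 g₀, x⁻¹ * g₀ ∈ W :=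
    (continuous_inv.mul continuous_const).tendsto' g₀ 1 (inv_mul_cancel g₀) hW
  filter_upwards [hV, hW'] with x hxV hxW using hWU x hxV g₀ (mem_of_mem_nhds hV) hxW

theorem LocallyLeftUC.comp {F : Type*} [FunLike F Y Y'] [AddMonoidHomClass F Y Y'] {φ : G → Y}
    (h : LocallyLeftUC φ) (ℓ : F) (hℓ : Continuous ℓ) : LocallyLeftUC fun x => ℓ (φ x) := by
  intro g₀
  obtain ⟨V, hV, hφV⟩ := h g₀
  refine ⟨V, hV, fun U hU => ?_⟩
  obtain ⟨W, hW, hWU⟩ := hφV (ℓ ⁻¹' U) (hℓ.tendsto' 0 0 (map_zero ℓ) hU)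
  refine ⟨W, hW, fun x hx y hy hxy => ?_⟩
  simpa only [Set.mem_preimage, map_sub] using hWU x hx y hy hxy

theorem HasDirDerivAt.continuousLinearMap_comp [Module ℝ Y] [Module ℝ Y'] {φ : G → Y}
    {X : OneParamSubgroup G} {g : G} {z : Y} (h : HasDirDerivAt φ X g z) (ℓ : Y →L[ℝ] Y') :
    HasDirDerivAt (fun x => ℓ (φ x)) X g (ℓ z) :=
  ((ℓ.continuous.tendsto z).comp h).congr fun t => by simp [map_sub, map_smul]

end TopologicalVectorSpace

section Normed

variable {G E : Type*} [Group G] [TopologicalSpace G] [NormedAddCommGroup E] [NormedSpace ℝ E]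

theorem hasDirDerivAt_iff_hasDerivAt {f : G → E} {X : OneParamSubgroup G} {g : G} {v : E} :
    HasDirDerivAt f X g v ↔ HasDerivAt (fun t => f (g * X.toFun t)) v 0 := by
  simp [hasDerivAt_iff_tendsto_slope_zero, HasDirDerivAt, X.toFun_zero]

theorem HasDirDerivAt.hasDerivAt_comp {f : G → E} {X : OneParamSubgroup G} {g : G} {σ : ℝ}
    {v : E} (h : HasDirDerivAt f X (g * X.toFun σ) v) :
    HasDerivAt (fun τ => f (g * X.toFun τ)) v σ := by
  have h' := hasDirDerivAt_iff_hasDerivAt.1 h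
  rw [← sub_self σ] at h'
  simpa only [mul_assoc, X.mul_toFun_sub] using h'.comp_sub_const σ σ

theorem exists_nhds_one_eventually_norm_sub_sub_smul_le [IsTopologicalGroup G] {f d : G → E} {Z : OneParamSubgroup G}
    (hf : ∀ x, HasDirDerivAt f Z x (d x)) (hd : LocallyLeftUC d) (g : G) {ε : ℝ} (hε : 0 < ε) :
    ∃ Ω ∈ 𝓝 (1 : G), ∀ᶠ s in 𝓝 (0 : ℝ), ∀ w ∈ Ω,
      ‖f (g * w * Z.toFun s) - f (g * w) - s • d g‖ ≤ ε * |s| := by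
  obtain ⟨V, hV, hdV⟩ := hd g
  obtain ⟨W, hW, hdW⟩ := hdV (Metric.ball 0 ε) (Metric.ball_mem_nhds 0 hε)
  have hS : {x | x ∈ V ∧ x⁻¹ * g ∈ W} ∈ 𝓝 g :=
    inter_mem hV ((continuous_inv.mul continuous_const).tendsto' g 1 (inv_mul_cancel g) hW)
  have hS' : (fun p : G × ℝ => g * p.1 * Z.toFun p.2) ⁻¹' {x | x ∈ V ∧ x⁻¹ * g ∈ W}
      ∈ 𝓝 ((1 : G), (0 : ℝ)) :=
    ((continuous_const.mul continuous_fst).mul (Z.continuous_toFun.comp continuous_snd)).tendsto'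
      _ g (by simp [Z.toFun_zero]) hS
  obtain ⟨Ω, hΩ, T, hT, hΩT⟩ := mem_nhds_prod_iff.1 hS'
  obtain ⟨r, hr, hrT⟩ := Metric.mem_nhds_iff.1 hT
  refine ⟨Ω, hΩ, ?_⟩
  filter_upwards [Metric.ball_mem_nhds 0 hr] with s hs w hw
  have hderiv : ∀ σ ∈ Metric.ball 0 r, HasDerivWithinAt (fun σ => f (g * w * Z.toFun σ) - σ • d g)
      (d (g * w * Z.toFun σ) - d g) (Metric.ball 0 r) σ := fun σ _ => by
    have h := (hf (g * w * Z.toFun σ)).hasDerivAt_comp.sub ((hasDerivAt_id' σ).smul_const (d g))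
    rw [one_smul] at h
    exact h.hasDerivWithinAt
  have hbound : ∀ σ ∈ Metric.ball (0 : ℝ) r, ‖d (g * w * Z.toFun σ) - d g‖ ≤ ε := fun σ hσ => by
    obtain ⟨hσV, hσW⟩ := hΩT (Set.mk_mem_prod hw (hrT hσ))
    exact (mem_ball_zero_iff.1 (hdW _ hσV g (mem_of_mem_nhds hV) hσW)).le
  have hmvt := (convex_ball 0 r).norm_image_sub_le_of_norm_hasDerivWithin_le hderiv hbound
    (Metric.mem_ball_self hr) hs
  simpa [Z.toFun_zero, sub_right_comm _ (s • d g)] using hmvt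

end Normed

namespace TrotterSum

variable {G : Type*} [Group G] [TopologicalSpace G] [IsTopologicalGroup G]
  {X X₁ X₂ : OneParamSubgroup G}

theorem tendsto_pow (hX : TrotterSum X X₁ X₂) (t : ℝ) :
    Tendsto (fun n : ℕ => (X₁.toFun (t / n) * X₂.toFun (t / n)) ^ n) atTop (𝓝 (X.toFun t)) := by
  have h : Tendsto (fun n : ℕ => (X.toFun t)⁻¹ * (X₁.toFun (t / n) * X₂.toFun (t / n)) ^ n)
      atTop (𝓝 1) := fun W hW => by
    obtain ⟨N, hN⟩ := hX {t} isCompact_singleton W hW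
    exact eventually_atTop.2 ⟨N, fun n hn => hN n hn t rfl⟩
  simpa using (tendsto_const_nhds (x := X.toFun t)).mul h

theorem eventually_forall_pow_mem (hX : TrotterSum X X₁ X₂) {U : Set G} (hU : U ∈ 𝓝 1) :
    ∀ᶠ t in 𝓝 (0 : ℝ), ∀ᶠ n : ℕ in atTop, ∀ k ≤ n,
      (X₁.toFun (t / n) * X₂.toFun (t / n)) ^ k ∈ U := by
  obtain ⟨U₀, hU₀, hU₀U⟩ := exists_nhds_one_split hU
  obtain ⟨r, hr, hrU₀⟩ := Metric.nhds_basis_closedBall.mem_iff.1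
    (X.continuous_toFun.tendsto' 0 1 X.toFun_zero hU₀)
  obtain ⟨N, hN⟩ := hX _ (isCompact_closedBall 0 r) U₀ hU₀
  filter_upwards [Metric.closedBall_mem_nhds 0 hr] with t ht
  have hsmall : ∀ k, ∀ᶠ n : ℕ in atTop, (X₁.toFun (t / n) * X₂.toFun (t / n)) ^ k ∈ U := fun k =>
    (((X₁.continuous_toFun.mul X₂.continuous_toFun).pow k).tendsto' 0 1
      (by simp [X₁.toFun_zero, X₂.toFun_zero])).comp (tendsto_const_div_atTop_nhds_zero_nat t) hU
  filter_upwards [(Finset.range (N + 1)).eventually_all.2 fun k _ => hsmall k] with n hn k hkn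
  by_cases hkN : k ≤ N
  · exact hn k (Finset.mem_range.2 (Nat.lt_succ_of_le hkN))
  -- for `k > N`, write the `k`-th power as `X (k t / n)` times a Trotter error at time `k t / n`
  have hτ : (k / n : ℝ) * t ∈ Metric.closedBall (0 : ℝ) r := by
    rw [mem_closedBall_zero_iff, Real.norm_eq_abs] at ht ⊢
    rw [abs_mul, abs_of_nonneg (by positivity)]
    calc (k / n : ℝ) * |t| ≤ 1 * |t| := by
          gcongr; exact div_le_one_of_le₀ (by exact_mod_cast hkn) n.cast_nonneg
      _ ≤ r := by rwa [one_mul]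
  have hN' := hN k (by omega) _ hτ
  have hk : (k : ℝ) ≠ 0 := Nat.cast_ne_zero.2 (by omega)
  rw [show (k / n : ℝ) * t / k = t / n by field_simp] at hN'
  simpa using hU₀U _ (hrU₀ hτ) _ hN'

variable {E : Type*} [NormedAddCommGroup E] [NormedSpace ℝ E] {f d₁ d₂ : G → E}

theorem eventually_norm_sub_sub_smul_le (hX : TrotterSum X X₁ X₂) (hf : Continuous f)
    (hf₁ : ∀ x, HasDirDerivAt f X₁ x (d₁ x)) (hf₂ : ∀ x, HasDirDerivAt f X₂ x (d₂ x))
    (hd₁ : LocallyLeftUC d₁) (hd₂ : LocallyLeftUC d₂) (g : G) {ε : ℝ} (hε : 0 < ε) :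
    ∀ᶠ t in 𝓝 (0 : ℝ), ‖f (g * X.toFun t) - f g - t • (d₁ g + d₂ g)‖ ≤ ε * |t| := by
  obtain ⟨Ω₁, hΩ₁, hf₁Ω⟩ :=
    exists_nhds_one_eventually_norm_sub_sub_smul_le hf₁ hd₁ g (half_pos hε)
  obtain ⟨Ω₂, hΩ₂, hf₂Ω⟩ :=
    exists_nhds_one_eventually_norm_sub_sub_smul_le hf₂ hd₂ g (half_pos hε)
  obtain ⟨U, hU, hUU⟩ := exists_nhds_one_split (inter_mem hΩ₁ hΩ₂)
  filter_upwards [hX.eventually_forall_pow_mem hU] with t hpow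
  have hs := tendsto_const_div_atTop_nhds_zero_nat t
  have hX₁U : ∀ᶠ n : ℕ in atTop, X₁.toFun (t / n) ∈ U :=
    hs (X₁.continuous_toFun.tendsto' 0 1 X₁.toFun_zero hU)
  have hlim := ((((hf.tendsto _).comp ((hX.tendsto_pow t).const_mul g)).sub_const (f g)).sub_const
    (t • (d₁ g + d₂ g))).norm
  refine le_of_tendsto hlim ?_
  filter_upwards [hpow, hX₁U, hs.eventually hf₁Ω, hs.eventually hf₂Ω, eventually_ne_atTop 0]
    with n hpow hX₁U hn₁ hn₂ hn
  set s := t / n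
  set P := X₁.toFun s * X₂.toFun s
  have hstep : ∀ k < n, ‖f (g * P ^ (k + 1)) - f (g * P ^ k) - s • (d₁ g + d₂ g)‖ ≤ ε * |s| := by
    intro k hk
    have hPk := hUU _ (hpow k hk.le) 1 (mem_of_mem_nhds hU)
    have hPkX₁ := hUU _ (hpow k hk.le) _ hX₁U
    rw [mul_one] at hPk
    have h₁ := hn₁ _ hPk.1
    have h₂ := hn₂ _ hPkX₁.2
    rw [← mul_assoc] at h₂
    have hP : g * P ^ (k + 1) = g * P ^ k * X₁.toFun s * X₂.toFun s := by
      simp only [pow_succ, P, mul_assoc]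
    calc ‖f (g * P ^ (k + 1)) - f (g * P ^ k) - s • (d₁ g + d₂ g)‖
        = ‖(f (g * P ^ k * X₁.toFun s * X₂.toFun s) - f (g * P ^ k * X₁.toFun s) - s • d₂ g)
            + (f (g * P ^ k * X₁.toFun s) - f (g * P ^ k) - s • d₁ g)‖ := by
          rw [hP]; congr 1; module
      _ ≤ ε / 2 * |s| + ε / 2 * |s| := norm_add_le_of_le h₂ h₁
      _ = ε * |s| := by ring
  have hns : (n : ℝ) * s = t := mul_div_cancel₀ t (Nat.cast_ne_zero.2 hn)
  have htel := norm_sub_sub_nsmul_le (a := fun k => f (g * P ^ k)) hstep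
  simp only [pow_zero, mul_one, ← Nat.cast_smul_eq_nsmul ℝ, smul_smul, hns] at htel
  calc _ ≤ n * (ε * |s|) := htel
    _ = ε * |t| := by rw [← hns, abs_mul, Nat.abs_cast]; ring

theorem hasDirDerivAt (hX : TrotterSum X X₁ X₂) (hf : Continuous f)
    (hf₁ : ∀ x, HasDirDerivAt f X₁ x (d₁ x)) (hf₂ : ∀ x, HasDirDerivAt f X₂ x (d₂ x))
    (hd₁ : LocallyLeftUC d₁) (hd₂ : LocallyLeftUC d₂) (g : G) :
    HasDirDerivAt f X g (d₁ g + d₂ g) := by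
  rw [hasDirDerivAt_iff_hasDerivAt, hasDerivAt_iff_isLittleO_nhds_zero]
  refine Asymptotics.IsLittleO.of_bound fun ε hε => ?_
  filter_upwards [hX.eventually_norm_sub_sub_smul_le hf hf₁ hf₂ hd₁ hd₂ g hε] with t ht
  simpa [X.toFun_zero] using ht

end TrotterSum

theorem dirDeriv_add_of_trotterSum
    {G Y : Type*} [Group G] [TopologicalSpace G] [IsTopologicalGroup G]
    [AddCommGroup Y] [Module ℝ Y] [TopologicalSpace Y] [IsTopologicalAddGroup Y]
    [ContinuousSMul ℝ Y] [LocallyConvexSpace ℝ Y] [T2Space Y]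
    (φ : G → Y) (D : OneParamSubgroup G → G → Y) (hφ : IsLUC1 φ D)
    (X X₁ X₂ : OneParamSubgroup G) (hX : TrotterSum X X₁ X₂) (g : G) :
    D X g = D X₁ g + D X₂ g := by
  obtain ⟨hφc, hφD, hDc⟩ := hφ
  refine (SeparatingDual.eq_iff_forall_dual_eq (R := ℝ)).2 fun ℓ => ?_
  have hℓφD : ∀ Z x, HasDirDerivAt (fun x => ℓ (φ x)) Z x (ℓ (D Z x)) := fun Z x =>
    (hφD Z x).continuousLinearMap_comp ℓ
  rw [map_add]
  exact tendsto_nhds_unique (hℓφD X g) <| hX.hasDirDerivAt (ℓ.continuous.comp hφc.continuous)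
    (hℓφD X₁) (hℓφD X₂) ((hDc X₁).comp ℓ ℓ.continuous) ((hDc X₂).comp ℓ ℓ.continuous) g
end

section
/- Let G be a topological group, Y a Hausdorff locally convex real topological vector space, and π a representation of G by continuous linear operators on Y such that the action map G × Y → Y, (g, y) ↦ π(g)y, is continuous and such that there is a neighborhood V of the identity in G for which the family of operators {π(g) : g ∈ V} is equicontinuous. Then for every y ∈ Y the following are equivalent: (i) for every one-parameter subgroup X of G, dπ(X)y exists; (ii) the orbit map G → Y, g ↦ π(g)y, is of class LUC¹. -/
open Filter Topology Pointwise

/-!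
Every orbit map `g ↦ π g y` is locally left uniformly continuous: near `g₀` one writes
`π x y - π x' y = π g₀ (π (g₀⁻¹ x) (y - π (x⁻¹ x') y))`, so continuity of the orbit at `1`
combined with equicontinuity of `π` on a neighbourhood of `1` does the job. A derivative
`z` of the orbit at `1` along `X` is transported to `π g z` at every `g`, and `g ↦ π g z`
is again an orbit map.
-/

theorem locallyLeftUC_orbit {G R Y : Type*} [Group G] [TopologicalSpace G] [ContinuousMul G]
    [Semiring R] [AddCommGroup Y] [Module R Y] [TopologicalSpace Y] [IsTopologicalAddGroup Y]
    (π : G → Y →L[R] Y)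
    (hπ_one : π 1 = ContinuousLinearMap.id R Y)
    (hπ_mul : ∀ g h : G, π (g * h) = (π g).comp (π h))
    (hequi : ∃ V ∈ 𝓝 (1 : G), ∀ U ∈ 𝓝 (0 : Y), ∃ U' ∈ 𝓝 (0 : Y),
      ∀ g ∈ V, ∀ z ∈ U', π g z ∈ U)
    {y : Y} (hy : ContinuousAt (fun g : G => π g y) 1) :
    LocallyLeftUC (fun g : G => π g y) := by
  obtain ⟨V₀, hV₀, hV₀_equi⟩ := hequi
  intro g₀
  refine ⟨(g₀⁻¹ * ·) ⁻¹' V₀,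
    (continuous_const_mul g₀⁻¹).continuousAt.preimage_mem_nhds (by simpa using hV₀), ?_⟩
  intro U hU
  obtain ⟨U', hU', hU'_maps⟩ :=
    hV₀_equi _ ((π g₀).continuous.continuousAt.preimage_mem_nhds (by simpa using hU))
  have hW : {w : G | y - π w y ∈ U'} ∈ 𝓝 (1 : G) := by
    have hsub : ContinuousAt (fun w : G => y - π w y) 1 := continuousAt_const.sub hy
    exact hsub.preimage_mem_nhds (by simpa [hπ_one] using hU')
  refine ⟨_, hW, fun x hx x' _ hxx' => ?_⟩
  have key : π g₀ (π (g₀⁻¹ * x) (y - π (x⁻¹ * x') y)) = π x y - π x' y := by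
    simp only [← ContinuousLinearMap.comp_apply, ← hπ_mul, map_sub, mul_inv_cancel_left,
      mul_assoc]
  rw [← key]
  exact hU'_maps _ hx _ hxx'

theorem hasDirDerivAt_orbit {G Y : Type*} [Group G] [TopologicalSpace G]
    [AddCommGroup Y] [Module ℝ Y] [TopologicalSpace Y]
    (π : G → Y →L[ℝ] Y) (hπ_mul : ∀ g h : G, π (g * h) = (π g).comp (π h))
    {X : OneParamSubgroup G} {y z : Y}
    (hz : Tendsto (fun t : ℝ => t⁻¹ • (π (X.toFun t) y - y)) (𝓝[≠] (0 : ℝ)) (𝓝 z))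
    (g : G) : HasDirDerivAt (fun g : G => π g y) X g (π g z) := by
  refine (((π g).continuous.tendsto z).comp hz).congr fun t => ?_
  simp [hπ_mul]

theorem hasDirDerivAt_orbit_one_iff {G Y : Type*} [Group G] [TopologicalSpace G]
    [AddCommGroup Y] [Module ℝ Y] [TopologicalSpace Y]
    (π : G → Y →L[ℝ] Y) (hπ_one : π 1 = ContinuousLinearMap.id ℝ Y)
    {X : OneParamSubgroup G} {y z : Y} :
    HasDirDerivAt (fun g : G => π g y) X 1 z ↔
      Tendsto (fun t : ℝ => t⁻¹ • (π (X.toFun t) y - y)) (𝓝[≠] (0 : ℝ)) (𝓝 z) := by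
  simp [HasDirDerivAt, hπ_one]

theorem differentiable_vector_iff_LUC1_general
    {G Y : Type*} [Group G] [TopologicalSpace G] [IsTopologicalGroup G]
    [AddCommGroup Y] [Module ℝ Y] [TopologicalSpace Y] [IsTopologicalAddGroup Y]
    (π : G → Y →L[ℝ] Y)
    (hπ_one : π 1 = ContinuousLinearMap.id ℝ Y)
    (hπ_mul : ∀ g h : G, π (g * h) = (π g).comp (π h))
    (hπ_cont : Continuous fun p : G × Y => π p.1 p.2)
    (hequi : ∃ V ∈ 𝓝 (1 : G), ∀ U ∈ 𝓝 (0 : Y), ∃ U' ∈ 𝓝 (0 : Y),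
      ∀ g ∈ V, ∀ z ∈ U', π g z ∈ U)
    (y : Y) :
    (∀ X : OneParamSubgroup G, ∃ z : Y,
        Tendsto (fun t : ℝ => t⁻¹ • (π (X.toFun t) y - y)) (𝓝[≠] (0 : ℝ)) (𝓝 z)) ↔
      ∃ D : OneParamSubgroup G → G → Y, IsLUC1 (fun g : G => π g y) D := by
  have orbit_uc (v : Y) : LocallyLeftUC (fun g : G => π g v) :=
    locallyLeftUC_orbit π hπ_one hπ_mul hequi
      (hπ_cont.comp (continuous_id.prodMk continuous_const)).continuousAt
  constructor
  · intro h
    choose z hz using h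
    exact ⟨fun X g => π g (z X), orbit_uc y,
      fun X => hasDirDerivAt_orbit π hπ_mul (hz X), fun X => orbit_uc (z X)⟩
  · rintro ⟨D, -, hD, -⟩ X
    exact ⟨D X 1, (hasDirDerivAt_orbit_one_iff π hπ_one).1 (hD X 1)⟩

theorem differentiable_vector_iff_LUC1
    {G Y : Type*} [Group G] [TopologicalSpace G] [IsTopologicalGroup G]
    [AddCommGroup Y] [Module ℝ Y] [TopologicalSpace Y] [IsTopologicalAddGroup Y]
    [ContinuousSMul ℝ Y] [LocallyConvexSpace ℝ Y] [T2Space Y]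
    (π : G → Y →L[ℝ] Y)
    (hπ_one : π 1 = ContinuousLinearMap.id ℝ Y)
    (hπ_mul : ∀ g h : G, π (g * h) = (π g).comp (π h))
    (hπ_cont : Continuous fun p : G × Y => π p.1 p.2)
    (hequi : ∃ V ∈ 𝓝 (1 : G), ∀ U ∈ 𝓝 (0 : Y), ∃ U' ∈ 𝓝 (0 : Y),
      ∀ g ∈ V, ∀ z ∈ U', π g z ∈ U)
    (y : Y) :
    (∀ X : OneParamSubgroup G, ∃ z : Y,
        Tendsto (fun t : ℝ => t⁻¹ • (π (X.toFun t) y - y)) (𝓝[≠] (0 : ℝ)) (𝓝 z)) ↔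
      ∃ D : OneParamSubgroup G → G → Y, IsLUC1 (fun g : G => π g y) D :=
  differentiable_vector_iff_LUC1_general π hπ_one hπ_mul hπ_cont hequi y
end

section
/- Let G be a topological group, Y a metrizable locally convex real topological vector space, and π a representation of G by continuous linear operators on Y such that the action map G × Y → Y, (g, y) ↦ π(g)y, is continuous and such that there is a neighborhood V of the identity in G for which the family of operators {π(g) : g ∈ V} is equicontinuous. Let V₀ be a real topological vector space which is a Baire space and ι a surjective map from V₀ onto the set of one-parameter subgroups of G such that ι(c·v)(s) = ι(v)(c·s) for all c, s ∈ ℝ and v ∈ V₀, such that ι(v + w) = ι(v) + ι(w) in the Trotter sense for all v, w ∈ V₀, and such that the map V₀ → C(ℝ, G), v ↦ ι(v), is continuous with respect to the compact-open topology on C(ℝ, G). If y ∈ Y is such that dπ(Z)y exists for every one-parameter subgroup Z of G, then the map V₀ → Y, v ↦ dπ(ι(v))y, is ℝ-linear and continuous. -/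
open Filter Topology Pointwise

/-!
The heart of the matter is additivity of `v ↦ dπ(ι v)y`. Put `z = z₁ + z₂`, `s = t/n` and
`g = X₁(s) X₂(s)`. Telescoping `π(gⁿ)y - y = ∑_{k<n} π(gᵏ)(π(g)y - y)` writes
`t⁻¹(π(gⁿ)y - y) - z` as the average over `k < n` of `π(gᵏ)(s⁻¹(π(g)y - y) - z)` plus the average
of `π(gᵏ)z - z`. Since the Trotter limit is uniform on compacts, for small `t` and large `n` all
`gᵏ` with `k < n` stay in a prescribed neighbourhood of `1`; by equicontinuity and local convexity
both averages are then small uniformly in `n`, and letting `n → ∞` (`gⁿ → X(t)`) bounds the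
difference quotient of `X` at `t`. Homogeneity is a change of variables. Finally `D` is additive
and a pointwise limit of the continuous maps `v ↦ n(π(ι v (1/n))y - y)`; by Baire's theorem it is
uniformly close to one of them on some open set, which gives continuity at `0`.
-/

lemma OneParamSubgroup.toFun_zero_s10 {G : Type*} [Group G] [TopologicalSpace G]
    (X : OneParamSubgroup G) : X.toFun 0 = 1 := by
  have h : X.toFun 0 = X.toFun 0 * X.toFun 0 := by simpa using X.map_add 0 0
  exact mul_eq_right.mp h.symm

section Trotter

variable {G : Type*} [Group G] [TopologicalSpace G] [IsTopologicalGroup G]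
  {X X₁ X₂ : OneParamSubgroup G}

lemma TrotterSum.tendsto_pow_s10 (h : TrotterSum X X₁ X₂) (t : ℝ) :
    Tendsto (fun n : ℕ => (X₁.toFun (t / n) * X₂.toFun (t / n)) ^ n) atTop (𝓝 (X.toFun t)) := by
  have h₁ : Tendsto (fun n : ℕ => (X.toFun t)⁻¹ * (X₁.toFun (t / n) * X₂.toFun (t / n)) ^ n)
      atTop (𝓝 1) := fun W hW => by
    obtain ⟨N, hN⟩ := h {t} isCompact_singleton W hW
    exact eventually_atTop.2 ⟨N, fun n hn => hN n hn t rfl⟩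
  simpa using h₁.const_mul (X.toFun t)

lemma eventually_forall_lt_pow_mem {f : ℝ → G} (hf : Continuous f) (hf0 : f 0 = 1) (t : ℝ)
    (N : ℕ) {W : Set G} (hW : W ∈ 𝓝 1) : ∀ᶠ n : ℕ in atTop, ∀ k < N, f (t / n) ^ k ∈ W := by
  refine (eventually_all_finite (Set.finite_Iio N)).2 fun k _ => ?_
  have hlim : Tendsto (fun n : ℕ => f (t / n) ^ k) atTop (𝓝 1) := by
    simpa [hf0] using (((hf.tendsto 0).comp (tendsto_const_div_atTop_nhds_zero_nat t)).pow k)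
  exact hlim hW

lemma TrotterSum.eventually_forall_pow_mem_s10 (h : TrotterSum X X₁ X₂) {W : Set G}
    (hW : W ∈ 𝓝 1) : ∀ᶠ t in 𝓝 (0 : ℝ), ∀ᶠ n : ℕ in atTop,
      ∀ k < n, (X₁.toFun (t / n) * X₂.toFun (t / n)) ^ k ∈ W := by
  obtain ⟨W₂, hW₂, hW₂W⟩ := exists_nhds_one_split hW
  have hX : ∀ᶠ s in 𝓝 (0 : ℝ), X.toFun s ∈ W₂ :=
    X.continuous_toFun.continuousAt.preimage_mem_nhds (by rwa [X.toFun_zero_s10])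
  obtain ⟨δ, hδ, hXδ⟩ := Metric.eventually_nhds_iff.mp hX
  filter_upwards [Metric.ball_mem_nhds 0 hδ] with t ht
  obtain ⟨N₀, hN₀⟩ := h (Metric.closedBall 0 |t|) (isCompact_closedBall 0 |t|) W₂ hW₂
  have hstep : Continuous fun s => X₁.toFun s * X₂.toFun s :=
    X₁.continuous_toFun.mul X₂.continuous_toFun
  filter_upwards [eventually_forall_lt_pow_mem hstep (by simp [OneParamSubgroup.toFun_zero_s10]) t
    (max N₀ 1) hW] with n hsmall k hkn
  rcases lt_or_ge k (max N₀ 1) with hkN | hNk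
  · exact hsmall k hkN
  -- `gᵏ = X(s) · (X(s)⁻¹ gᵏ)` with `s = k t / n`, since `s / k = t / n`
  have hk : (k : ℝ) ≠ 0 := Nat.cast_ne_zero.2 (by have := le_of_max_le_right hNk; omega)
  have hn : (0 : ℝ) < n := by exact_mod_cast k.zero_le.trans_lt hkn
  have hs : |k * t / n| ≤ |t| := by
    rw [abs_div, abs_mul, Nat.abs_cast, abs_of_pos hn, div_le_iff₀ hn, mul_comm _ (n : ℝ)]
    gcongr
  have htr := hN₀ k (le_of_max_le_left hNk) (k * t / n) (mem_closedBall_zero_iff.mpr hs)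
  rw [show k * t / n / k = t / n by field_simp] at htr
  have := hW₂W _ (hXδ (by simpa using hs.trans_lt (by simpa using ht))) _ htr
  rwa [mul_inv_cancel_left] at this

end Trotter

lemma sub_mem_add_of_forall_pow_mem {Y : Type*} [AddCommGroup Y] [Module ℝ Y]
    [TopologicalSpace Y] [IsTopologicalAddGroup Y] {T : Y →L[ℝ] Y} {U : Set Y}
    (hU : Convex ℝ U) {n : ℕ} (hn : n ≠ 0) {s : ℝ} {y z : Y}
    (h₁ : ∀ k < n, (T ^ k) (s⁻¹ • (T y - y) - z) ∈ U) (h₂ : ∀ k < n, (T ^ k) z - z ∈ U) :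
    (n * s)⁻¹ • ((T ^ n) y - y) - z ∈ U + U := by
  have htel : (T ^ n) y - y = ∑ k ∈ Finset.range n, (T ^ k) (T y - y) := by
    simpa [sum_apply, map_sub] using
      (congrArg (fun A : Y →L[ℝ] Y => A y) (geom_sum_mul T n)).symm
  have hsplit : (n * s)⁻¹ • ((T ^ n) y - y) - z =
      ∑ k ∈ Finset.range n, (n : ℝ)⁻¹ • (T ^ k) (s⁻¹ • (T y - y) - z) +
        ∑ k ∈ Finset.range n, (n : ℝ)⁻¹ • ((T ^ k) z - z) := by
    have hz : z = ∑ k ∈ Finset.range n, (n : ℝ)⁻¹ • z := by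
      simp [Finset.sum_const, ← Nat.cast_smul_eq_nsmul ℝ, smul_smul, hn]
    rw [htel, Finset.smul_sum, hz, ← Finset.sum_sub_distrib, ← Finset.sum_add_distrib, ← hz]
    refine Finset.sum_congr rfl fun k _ => ?_
    simp only [map_sub, map_smul, mul_inv]
    module
  have havg : ∀ a : ℕ → Y, (∀ k < n, a k ∈ U) → ∑ k ∈ Finset.range n, (n : ℝ)⁻¹ • a k ∈ U :=
    fun a ha => hU.sum_mem (fun _ _ => by positivity) (by simp [hn])
      (fun k hk => ha k (Finset.mem_range.mp hk))
  rw [hsplit]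
  exact Set.add_mem_add (havg _ h₁) (havg _ h₂)

section OrbitDeriv

variable {G Y : Type*} [Monoid G] [AddCommGroup Y] [Module ℝ Y]
  [TopologicalSpace Y] [IsTopologicalAddGroup Y] {ρ : G →* (Y →L[ℝ] Y)} {y z z₁ z₂ : Y}

/-- `dπ(γ)y = z`, with `π = ρ` and `γ` a curve in `G`. -/
def HasOrbitDeriv (ρ : G →* (Y →L[ℝ] Y)) (γ : ℝ → G) (y z : Y) : Prop :=
  Tendsto (fun t : ℝ => t⁻¹ • (ρ (γ t) y - y)) (𝓝[≠] 0) (𝓝 z)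

lemma HasOrbitDeriv.comp_const_mul [ContinuousConstSMul ℝ Y] {γ : ℝ → G}
    (h : HasOrbitDeriv ρ γ y z) (hγ : γ 0 = 1) (c : ℝ) :
    HasOrbitDeriv ρ (fun t => γ (c * t)) y (c • z) := by
  rcases eq_or_ne c 0 with rfl | hc
  · simpa [HasOrbitDeriv, hγ] using tendsto_const_nhds
  have hmul : Tendsto (c * ·) (𝓝[≠] (0 : ℝ)) (𝓝[≠] 0) :=
    tendsto_nhdsWithin_iff.2 ⟨((continuous_const_mul c).tendsto' 0 0 (mul_zero c)).mono_left
      nhdsWithin_le_nhds, eventually_mem_nhdsWithin.mono fun t ht => mul_ne_zero hc ht⟩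
  refine ((h.comp hmul).const_smul c).congr fun t => ?_
  simp only [Function.comp_apply, smul_smul, mul_inv, mul_inv_cancel_left₀ hc]

lemma HasOrbitDeriv.mul [TopologicalSpace G] (hρ : Continuous fun p : G × Y => ρ p.1 p.2)
    {γ₁ γ₂ : ℝ → G}
    (h₁ : HasOrbitDeriv ρ γ₁ y z₁) (h₂ : HasOrbitDeriv ρ γ₂ y z₂)
    (hγ₁ : Tendsto γ₁ (𝓝[≠] 0) (𝓝 1)) :
    HasOrbitDeriv ρ (fun t => γ₁ t * γ₂ t) y (z₁ + z₂) := by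
  have hfirst : Tendsto (fun t : ℝ => ρ (γ₁ t) (t⁻¹ • (ρ (γ₂ t) y - y))) (𝓝[≠] 0) (𝓝 z₂) := by
    simpa only [Function.comp_def, map_one, one_apply_eq_self] using
      (hρ.tendsto (1, z₂)).comp (hγ₁.prodMk_nhds h₂)
  refine (h₁.add hfirst).congr fun t => ?_
  simp only [map_mul, mul_apply_eq_comp, map_smul, map_sub]
  module

end OrbitDeriv

theorem HasOrbitDeriv.of_trotterSum {G Y : Type*} [Group G] [TopologicalSpace G]
    [IsTopologicalGroup G] [AddCommGroup Y] [Module ℝ Y] [TopologicalSpace Y]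
    [IsTopologicalAddGroup Y] [ContinuousConstSMul ℝ Y] [LocallyConvexSpace ℝ Y]
    {ρ : G →* (Y →L[ℝ] Y)}
    (hρ : Continuous fun p : G × Y => ρ p.1 p.2)
    (hequi : ∃ V ∈ 𝓝 (1 : G), ∀ U ∈ 𝓝 (0 : Y), ∃ U' ∈ 𝓝 (0 : Y),
      ∀ g ∈ V, ∀ z ∈ U', ρ g z ∈ U)
    {X X₁ X₂ : OneParamSubgroup G} (htr : TrotterSum X X₁ X₂) {y z₁ z₂ : Y}
    (h₁ : HasOrbitDeriv ρ X₁.toFun y z₁) (h₂ : HasOrbitDeriv ρ X₂.toFun y z₂) :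
    HasOrbitDeriv ρ X.toFun y (z₁ + z₂) := by
  set z := z₁ + z₂
  have hstep := h₁.mul hρ h₂ <|
    (X₁.continuous_toFun.tendsto' 0 1 X₁.toFun_zero_s10).mono_left nhdsWithin_le_nhds
  obtain ⟨V, hV, hVequi⟩ := hequi
  rw [HasOrbitDeriv, ← tendsto_sub_nhds_zero_iff, (closed_nhds_basis 0).tendsto_right_iff]
  rintro C ⟨hC, hCcl⟩
  obtain ⟨U₁, hU₁, hU₁C⟩ := exists_nhds_zero_half hC
  obtain ⟨U₂, ⟨hU₂, hU₂cvx⟩, hU₂U₁⟩ := (LocallyConvexSpace.convex_basis_zero ℝ Y).mem_iff.mp hU₁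
  obtain ⟨U₃, hU₃, hU₃U₂⟩ := hVequi U₂ hU₂
  have hV₂ : V ∩ {g | ρ g z - z ∈ U₂} ∈ 𝓝 1 := by
    refine inter_mem hV (((hρ.comp (continuous_id.prodMk continuous_const)).sub
      continuous_const).continuousAt.preimage_mem_nhds ?_)
    simpa using hU₂
  filter_upwards [nhdsWithin_le_nhds (htr.eventually_forall_pow_mem_s10 hV₂), self_mem_nhdsWithin]
    with t hpow (ht : t ≠ 0)
  have hs : Tendsto (fun n : ℕ => t / n) atTop (𝓝[≠] 0) :=
    tendsto_nhdsWithin_iff.2 ⟨tendsto_const_div_atTop_nhds_zero_nat t,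
      (eventually_ne_atTop 0).mono fun n hn => div_ne_zero ht (Nat.cast_ne_zero.2 hn)⟩
  have hlim : Tendsto
      (fun n : ℕ => t⁻¹ • (ρ ((X₁.toFun (t / n) * X₂.toFun (t / n)) ^ n) y - y) - z)
      atTop (𝓝 (t⁻¹ • (ρ (X.toFun t) y - y) - z)) :=
    (((hρ.comp (continuous_id.prodMk continuous_const)).sub continuous_const).const_smul t⁻¹
      |>.sub continuous_const |>.tendsto _).comp (htr.tendsto_pow_s10 t)
  refine hCcl.mem_of_tendsto hlim ?_
  filter_upwards [hpow, hs.eventually ((tendsto_sub_nhds_zero_iff.2 hstep).eventually hU₃),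
    eventually_ne_atTop 0] with n hpow_n hstep_n hn
  obtain ⟨a, ha, b, hb, hab⟩ := sub_mem_add_of_forall_pow_mem
    (T := ρ (X₁.toFun (t / n) * X₂.toFun (t / n))) hU₂cvx hn (s := t / n)
    (fun k hk => by rw [← map_pow]; exact hU₃U₂ _ (hpow_n k hk).1 _ hstep_n)
    (fun k hk => by rw [← map_pow]; exact (hpow_n k hk).2)
  rw [mul_div_cancel₀ t (Nat.cast_ne_zero.2 hn), ← map_pow] at hab
  rw [← hab]
  exact hU₁C a (hU₂U₁ ha) b (hU₂U₁ hb)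

section Baire

variable {V Y : Type*} [TopologicalSpace V] [BaireSpace V] [AddCommGroup Y] [TopologicalSpace Y]
  [IsTopologicalAddGroup Y] {f : ℕ → V → Y} {F : V → Y}

lemma exists_isOpen_forall_sub_mem_of_tendsto [Nonempty V] (hf : ∀ n, Continuous (f n))
    (hF : ∀ x, Tendsto (fun n => f n x) atTop (𝓝 (F x))) {C : Set Y} (hC : C ∈ 𝓝 0)
    (hCcl : IsClosed C) :
    ∃ N, ∃ O : Set V, IsOpen O ∧ O.Nonempty ∧ ∀ x ∈ O, F x - f N x ∈ C := by
  obtain ⟨C₀, hC₀, -, hC₀neg, hC₀C⟩ := exists_closed_nhds_zero_neg_eq_add_subset hC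
  let E : ℕ → Set V := fun N => {x | ∀ n ≥ N, f n x - f N x ∈ C}
  have hEcl : ∀ N, IsClosed (E N) := fun N => by
    simp only [E, Set.ofPred_forall]
    exact isClosed_iInter fun n => isClosed_iInter fun _ => hCcl.preimage ((hf n).sub (hf N))
  have hEcover : ⋃ N, E N = Set.univ := by
    refine Set.eq_univ_of_forall fun x => ?_
    obtain ⟨N, hN⟩ := eventually_atTop.mp ((tendsto_sub_nhds_zero_iff.2 (hF x)).eventually hC₀)
    refine Set.mem_iUnion.2 ⟨N, fun n hn => ?_⟩
    have hneg : -(f N x - F x) ∈ C₀ := by rw [← hC₀neg]; exact Set.neg_mem_neg.2 (hN N le_rfl)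
    simpa using hC₀C (Set.add_mem_add (hN n hn) hneg)
  obtain ⟨N, hN⟩ := nonempty_interior_of_iUnion_of_closed hEcl hEcover
  refine ⟨N, interior (E N), isOpen_interior, hN, fun x hx => ?_⟩
  exact hCcl.mem_of_tendsto ((hF x).sub_const (f N x))
    (eventually_atTop.2 ⟨N, interior_subset hx⟩)

theorem AddMonoidHom.continuous_of_tendsto_continuous [AddGroup V] [IsTopologicalAddGroup V]
    (D : V →+ Y) (hf : ∀ n, Continuous (f n))
    (hD : ∀ x, Tendsto (fun n => f n x) atTop (𝓝 (D x))) : Continuous D := by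
  refine continuous_of_continuousAt_zero D ?_
  rw [ContinuousAt, map_zero]
  refine fun U hU => Filter.mem_map.2 ?_
  obtain ⟨C, hC, -, -, hCU⟩ := exists_closed_nhds_zero_neg_eq_add_subset hU
  obtain ⟨C₁, hC₁, hC₁cl, hC₁neg, hC₁C⟩ := exists_closed_nhds_zero_neg_eq_add_subset hC
  obtain ⟨N, O, hO, ⟨x₀, hx₀⟩, hDf⟩ := exists_isOpen_forall_sub_mem_of_tendsto hf hD hC₁ hC₁cl
  have hnear : ∀ᶠ u in 𝓝 0, u + x₀ ∈ O ∧ f N (u + x₀) - f N x₀ ∈ C := by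
    have hcont : Continuous fun u => u + x₀ := continuous_add_const x₀
    refine ((hcont.tendsto' 0 x₀ (zero_add x₀)).eventually (hO.mem_nhds hx₀)).and ?_
    exact ((hf N).comp hcont |>.sub continuous_const).tendsto' 0 0 (by simp) |>.eventually hC
  filter_upwards [hnear] with u ⟨hu, hfu⟩
  have hsplit : D u =
      ((D (u + x₀) - f N (u + x₀)) + -(D x₀ - f N x₀)) + (f N (u + x₀) - f N x₀) := by
    rw [map_add]; abel
  have hneg : -(D x₀ - f N x₀) ∈ C₁ := by rw [← hC₁neg]; exact Set.neg_mem_neg.2 (hDf x₀ hx₀)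
  rw [Set.mem_preimage, hsplit]
  exact hCU (Set.add_mem_add (hC₁C (Set.add_mem_add (hDf _ hu) hneg)) hfu)

end Baire

theorem dPi_linear_continuous_general
    {G Y V₀ : Type*} [Group G] [TopologicalSpace G] [IsTopologicalGroup G]
    [AddCommGroup Y] [Module ℝ Y] [TopologicalSpace Y] [IsTopologicalAddGroup Y]
    [ContinuousSMul ℝ Y] [LocallyConvexSpace ℝ Y] [TopologicalSpace.MetrizableSpace Y]
    [AddCommGroup V₀] [Module ℝ V₀] [TopologicalSpace V₀] [IsTopologicalAddGroup V₀]
    [BaireSpace V₀]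
    (π : G → Y →L[ℝ] Y)
    (hπ_one : π 1 = ContinuousLinearMap.id ℝ Y)
    (hπ_mul : ∀ g h : G, π (g * h) = (π g).comp (π h))
    (hπ_cont : Continuous fun p : G × Y => π p.1 p.2)
    (hequi : ∃ V ∈ 𝓝 (1 : G), ∀ U ∈ 𝓝 (0 : Y), ∃ U' ∈ 𝓝 (0 : Y),
      ∀ g ∈ V, ∀ z ∈ U', π g z ∈ U)
    (ι : V₀ → OneParamSubgroup G)
    (hscal : ∀ (c : ℝ) (v : V₀) (s : ℝ), (ι (c • v)).toFun s = (ι v).toFun (c * s))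
    (hadd : ∀ v w : V₀, TrotterSum (ι (v + w)) (ι v) (ι w))
    (hιcont : Continuous fun v : V₀ =>
      (⟨(ι v).toFun, (ι v).continuous_toFun⟩ : C(ℝ, G)))
    (y : Y) (D : V₀ → Y)
    (hD : ∀ v : V₀,
      Tendsto (fun t : ℝ => t⁻¹ • (π ((ι v).toFun t) y - y)) (𝓝[≠] (0 : ℝ)) (𝓝 (D v))) :
    IsLinearMap ℝ D ∧ Continuous D := by
  let ρ : G →* (Y →L[ℝ] Y) := ⟨⟨π, hπ_one⟩, hπ_mul⟩
  have hD' (v : V₀) : HasOrbitDeriv ρ (ι v).toFun y (D v) := hD v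
  have hDadd (v w : V₀) : D (v + w) = D v + D w :=
    tendsto_nhds_unique (hD' (v + w)) ((hD' v).of_trotterSum hπ_cont hequi (hadd v w) (hD' w))
  have hDsmul (c : ℝ) (v : V₀) : D (c • v) = c • D v := by
    refine tendsto_nhds_unique (hD' (c • v)) ?_
    simpa only [HasOrbitDeriv, hscal] using (hD' v).comp_const_mul (ι v).toFun_zero_s10 c
  refine ⟨⟨hDadd, hDsmul⟩, ?_⟩
  have ht : Tendsto (fun n : ℕ => 1 / ((n : ℝ) + 1)) atTop (𝓝[≠] 0) :=
    tendsto_nhdsWithin_iff.2 ⟨tendsto_one_div_add_atTop_nhds_zero_nat,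
      Eventually.of_forall fun n => (by positivity : 1 / ((n : ℝ) + 1) ≠ 0)⟩
  refine AddMonoidHom.continuous_of_tendsto_continuous (⟨⟨D, ?_⟩, hDadd⟩ : V₀ →+ Y)
    (f := fun n v => (1 / ((n : ℝ) + 1))⁻¹ • (π ((ι v).toFun (1 / ((n : ℝ) + 1))) y - y))
    (fun n => ?_) (fun v => (hD v).comp ht)
  · simpa using hDsmul 0 0
  · exact ((hπ_cont.comp (((continuous_eval_const _).comp hιcont).prodMk continuous_const)).sub
      continuous_const).const_smul _

theorem dPi_linear_continuous
    {G Y V₀ : Type*} [Group G] [TopologicalSpace G] [IsTopologicalGroup G]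
    [AddCommGroup Y] [Module ℝ Y] [TopologicalSpace Y] [IsTopologicalAddGroup Y]
    [ContinuousSMul ℝ Y] [LocallyConvexSpace ℝ Y] [TopologicalSpace.MetrizableSpace Y]
    [AddCommGroup V₀] [Module ℝ V₀] [TopologicalSpace V₀] [IsTopologicalAddGroup V₀]
    [ContinuousSMul ℝ V₀] [BaireSpace V₀]
    (π : G → Y →L[ℝ] Y)
    (hπ_one : π 1 = ContinuousLinearMap.id ℝ Y)
    (hπ_mul : ∀ g h : G, π (g * h) = (π g).comp (π h))
    (hπ_cont : Continuous fun p : G × Y => π p.1 p.2)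
    (hequi : ∃ V ∈ 𝓝 (1 : G), ∀ U ∈ 𝓝 (0 : Y), ∃ U' ∈ 𝓝 (0 : Y),
      ∀ g ∈ V, ∀ z ∈ U', π g z ∈ U)
    (ι : V₀ → OneParamSubgroup G) (hι_surj : Function.Surjective ι)
    (hscal : ∀ (c : ℝ) (v : V₀) (s : ℝ), (ι (c • v)).toFun s = (ι v).toFun (c * s))
    (hadd : ∀ v w : V₀, TrotterSum (ι (v + w)) (ι v) (ι w))
    (hιcont : Continuous fun v : V₀ =>
      (⟨(ι v).toFun, (ι v).continuous_toFun⟩ : C(ℝ, G)))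
    (y : Y) (D : V₀ → Y)
    (hD : ∀ v : V₀,
      Tendsto (fun t : ℝ => t⁻¹ • (π ((ι v).toFun t) y - y)) (𝓝[≠] (0 : ℝ)) (𝓝 (D v))) :
    IsLinearMap ℝ D ∧ Continuous D :=
  dPi_linear_continuous_general π hπ_one hπ_mul hπ_cont hequi ι hscal hadd hιcont y D hD
end
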